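/- arXiv:math/0602185 — 7 statements merged into one kernel-verified Lean document; each statement's English description precedes it below -/
import Mathlib

section
/- Let ω ∈ ℓ¹(ℕ) be nonnegative with ∑ ωᵢ = 1, and let r₁, r_∞ > 0. The open ℓ¹-ball of radius r₁ centered at 0 and the set of sequences within ℓ∞-distance r_∞ of ω intersect (i.e., there exists x ∈ ℓ¹ with ‖x‖₁ < r₁ and ‖x - ω‖_∞ < r_∞) if and only if ∑ᵢ max(0, ωᵢ - r_∞) < r₁. -/
/-!
If `‖x‖₁ < r₁` and `|xᵢ - ωᵢ| < r_∞` for all `i`, then `max 0 (ωᵢ - r_∞) ≤ |xᵢ|`, and summing gives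
the inequality. Conversely, the soft-thresholded sequence `max 0 (ωᵢ - c)` lies within `c` of `ω`
in the sup norm and has `ℓ¹`-norm `∑ᵢ max 0 (ωᵢ - c)`; by dominated convergence this sum is
continuous in `c > 0`, so some threshold `c < r_∞` still keeps it below `r₁`.
-/

open Filter Topology

variable {ι : Type*}

namespace lp

lemma summable_abs_of_one (x : lp (fun _ : ι => ℝ) 1) : Summable fun i => |x i| := by
  simpa using (lp.memℓp x).summable (p := 1) (by norm_num)

lemma norm_eq_tsum_abs_of_one (x : lp (fun _ : ι => ℝ) 1) : ‖x‖ = ∑' i, |x i| := by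
  simpa using lp.norm_eq_tsum_rpow (p := 1) (by norm_num) x

lemma bddAbove_range_abs_sub_of_one (x y : lp (fun _ : ι => ℝ) 1) :
    BddAbove (Set.range fun i => |x i - y i|) := by
  refine ⟨‖x - y‖, ?_⟩
  rintro _ ⟨i, rfl⟩
  simpa using lp.norm_apply_le_norm one_ne_zero (x - y) i

end lp

lemma max_zero_sub_le_abs_of_abs_sub_le {a x r : ℝ} (h : |x - a| ≤ r) : max 0 (a - r) ≤ |x| :=
  max_le (abs_nonneg x) (by linarith [abs_sub_abs_le_abs_sub a x, abs_sub_comm x a, le_abs_self a])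

lemma abs_max_zero_sub_sub_le {a c : ℝ} (ha : 0 ≤ a) (hc : 0 ≤ c) : |max 0 (a - c) - a| ≤ c := by
  rcases le_total a c with hac | hca
  · rw [max_eq_left (by linarith), zero_sub, abs_neg, abs_of_nonneg ha]
    exact hac
  · rw [max_eq_right (by linarith), sub_sub_cancel_left, abs_neg, abs_of_nonneg hc]

lemma abs_max_zero_sub_le_abs {a c : ℝ} (hc : 0 ≤ c) : |max 0 (a - c)| ≤ |a| := by
  rw [abs_of_nonneg (le_max_left _ _)]
  exact max_le (abs_nonneg a) (by linarith [le_abs_self a])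

lemma tsum_max_zero_sub_le_norm (x : lp (fun _ : ι => ℝ) 1) (ω : ι → ℝ) {r : ℝ}
    (h : ∀ i, |x i - ω i| ≤ r) : ∑' i, max 0 (ω i - r) ≤ ‖x‖ := by
  have hle : ∀ i, max 0 (ω i - r) ≤ |x i| := fun i => max_zero_sub_le_abs_of_abs_sub_le (h i)
  have hx := lp.summable_abs_of_one x
  rw [lp.norm_eq_tsum_abs_of_one]
  exact (hx.of_nonneg_of_le (fun _ => le_max_left _ _) hle).tsum_le_tsum hle hx

lemma continuousAt_tsum_max_zero_sub (ω : lp (fun _ : ι => ℝ) 1) {r : ℝ} (hr : 0 < r) :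
    ContinuousAt (fun c => ∑' i, max 0 (ω i - c)) r := by
  refine tendsto_tsum_of_dominated_convergence (lp.summable_abs_of_one ω)
    (fun i => (continuous_const.max (continuous_const.sub continuous_id)).continuousAt) ?_
  filter_upwards [lt_mem_nhds hr] with c hc i
  exact abs_max_zero_sub_le_abs hc.le

lemma exists_lt_tsum_max_zero_sub_lt (ω : lp (fun _ : ι => ℝ) 1) {r s : ℝ} (hr : 0 < r)
    (h : ∑' i, max 0 (ω i - r) < s) : ∃ c, ∑' i, max 0 (ω i - c) < s ∧ 0 < c ∧ c < r := by
  have hnear : ∀ᶠ c in 𝓝 r, ∑' i, max 0 (ω i - c) < s ∧ 0 < c :=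
    ((continuousAt_tsum_max_zero_sub ω hr).eventually (gt_mem_nhds h)).and (lt_mem_nhds hr)
  obtain ⟨c, ⟨hc, hcpos⟩, hcr⟩ := (hnear.and_frequently (frequently_lt_nhds r)).exists
  exact ⟨c, hc, hcpos, hcr⟩

noncomputable def lp.softThreshold (ω : lp (fun _ : ι => ℝ) 1) {c : ℝ} (hc : 0 ≤ c) :
    lp (fun _ : ι => ℝ) 1 :=
  ⟨fun i => max 0 (ω i - c), (lp.memℓp ω).mono' fun _ => abs_max_zero_sub_le_abs hc⟩

lemma lp.norm_softThreshold (ω : lp (fun _ : ι => ℝ) 1) {c : ℝ} (hc : 0 ≤ c) :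
    ‖lp.softThreshold ω hc‖ = ∑' i, max 0 (ω i - c) := by
  rw [lp.norm_eq_tsum_abs_of_one]
  exact tsum_congr fun _ => abs_of_nonneg (le_max_left _ _)

theorem stmt_4_general (ω : lp (fun _ : ℕ => ℝ) 1) (hpos : ∀ i, 0 ≤ ω i)
    (r₁ r_inf : ℝ) (hrinf : 0 < r_inf) :
    (∃ x : lp (fun _ : ℕ => ℝ) 1, ‖x‖ < r₁ ∧ (⨆ i, |x i - ω i|) < r_inf) ↔
      (∑' i, max 0 (ω i - r_inf)) < r₁ := by
  constructor
  · rintro ⟨x, hx, hsup⟩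
    have hclose : ∀ i, |x i - ω i| ≤ r_inf := fun i =>
      ((le_ciSup (lp.bddAbove_range_abs_sub_of_one x ω) i).trans_lt hsup).le
    exact (tsum_max_zero_sub_le_norm x ω hclose).trans_lt hx
  · intro h
    obtain ⟨c, hc, hcpos, hcr⟩ := exists_lt_tsum_max_zero_sub_lt ω hrinf h
    refine ⟨lp.softThreshold ω hcpos.le, (lp.norm_softThreshold ω hcpos.le).trans_lt hc, ?_⟩
    exact (ciSup_le fun i => abs_max_zero_sub_sub_le (hpos i) hcpos.le).trans_lt hcr

theorem stmt_4 (ω : lp (fun _ : ℕ => ℝ) 1) (hpos : ∀ i, 0 ≤ ω i)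
    (hone : ∑' i, ω i = 1) (r₁ r_inf : ℝ) (hr₁ : 0 < r₁) (hrinf : 0 < r_inf) :
    (∃ x : lp (fun _ : ℕ => ℝ) 1, ‖x‖ < r₁ ∧ (⨆ i, |x i - ω i|) < r_inf) ↔
      (∑' i, max 0 (ω i - r_inf)) < r₁ :=
  stmt_4_general ω hpos r₁ r_inf hrinf
end

section
/- Let ω, σ be finitely supported nonnegative sequences each summing to 1 and indexed by Fin n. If ∑ᵢ max(0, σᵢ - r) ≤ ∑ᵢ max(0, ωᵢ - r) for all r ≥ 0, then -∑ᵢ σᵢ ln σᵢ ≥ -∑ᵢ ωᵢ ln ωᵢ (with the convention 0 ln 0 = 0). -/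
open Real Set intervalIntegral MeasureTheory

/-! For `0 ≤ x ≤ 1` one has `x log x = ∫₀¹ ((x - r)⁺ - x (1 - r)) / r dr`. Summing over the
coordinates of a vector `x` with `∑ xᵢ` fixed, `∑ xᵢ log xᵢ` becomes the integral of
`(∑ (xᵢ - r)⁺ - (∑ xᵢ)(1 - r)) / r`, which is monotone in the tail sums `∑ (xᵢ - r)⁺`. Hence the
hypothesis on the tail sums compares the two entropies pointwise under the integral. -/

noncomputable def mulLogKernel (x r : ℝ) : ℝ := (max 0 (x - r) - x * (1 - r)) / r

lemma mulLogKernel_of_le {x r : ℝ} (hr : 0 < r) (hrx : r ≤ x) : mulLogKernel x r = x - 1 := by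
  rw [mulLogKernel, max_eq_right (sub_nonneg.2 hrx)]
  field_simp
  ring

lemma mulLogKernel_of_ge {x r : ℝ} (hr : 0 < r) (hxr : x ≤ r) :
    mulLogKernel x r = x - x * r⁻¹ := by
  rw [mulLogKernel, max_eq_left (sub_nonpos.2 hxr)]
  field_simp
  ring

lemma eqOn_mulLogKernel_left {x : ℝ} (hx : 0 ≤ x) :
    EqOn (mulLogKernel x) (fun _ => x - 1) (uIoc 0 x) := by
  rw [uIoc_of_le hx]
  exact fun r hr => mulLogKernel_of_le hr.1 hr.2

lemma eqOn_mulLogKernel_right {x : ℝ} (hx0 : 0 ≤ x) (hx1 : x ≤ 1) :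
    EqOn (mulLogKernel x) (fun r => x - x * r⁻¹) (uIoc x 1) := by
  rw [uIoc_of_le hx1]
  exact fun r hr => mulLogKernel_of_ge (hx0.trans_lt hr.1) hr.1.le

lemma intervalIntegrable_mulLogKernel {x : ℝ} (hx0 : 0 ≤ x) (hx1 : x ≤ 1) :
    IntervalIntegrable (mulLogKernel x) volume 0 1 := by
  rcases hx0.eq_or_lt with rfl | hx
  · exact (intervalIntegrable_congr (eqOn_mulLogKernel_right le_rfl hx1)).2 (by simp)
  · have left := (intervalIntegrable_congr (eqOn_mulLogKernel_left hx0)).2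
      (intervalIntegrable_const (μ := volume) (c := x - 1))
    have right := (intervalIntegrable_congr (eqOn_mulLogKernel_right hx0 hx1)).2
      (intervalIntegrable_const.sub
        ((intervalIntegrable_inv_iff.2 (.inr (notMem_uIcc_of_lt hx one_pos))).const_mul x))
    exact left.trans right

theorem integral_mulLogKernel {x : ℝ} (hx0 : 0 ≤ x) (hx1 : x ≤ 1) :
    ∫ r in 0..1, mulLogKernel x r = x * log x := by
  rcases hx0.eq_or_lt with rfl | hx
  · rw [integral_congr_ae (ae_of_all _ (eqOn_mulLogKernel_right le_rfl hx1))]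
    simp
  · have h0 : (0 : ℝ) ∉ uIcc x 1 := notMem_uIcc_of_lt hx one_pos
    have hinv := intervalIntegrable_inv_iff.2 (.inr h0)
    have hK := intervalIntegrable_mulLogKernel hx0 hx1
    have hxI : x ∈ uIcc 0 1 := by
      rw [uIcc_of_le zero_le_one]
      exact ⟨hx0, hx1⟩
    rw [← integral_add_adjacent_intervals (hK.mono_set (uIcc_subset_uIcc left_mem_uIcc hxI))
        (hK.mono_set (uIcc_subset_uIcc hxI right_mem_uIcc)),
      integral_congr_ae (ae_of_all _ (eqOn_mulLogKernel_left hx0)),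
      integral_congr_ae (ae_of_all _ (eqOn_mulLogKernel_right hx0 hx1)),
      integral_sub intervalIntegrable_const (hinv.const_mul x), intervalIntegral.integral_const_mul,
      integral_inv h0, one_div, log_inv]
    simp only [intervalIntegral.integral_const, smul_eq_mul]
    ring

lemma sum_mulLogKernel {ι : Type*} (s : Finset ι) (x : ι → ℝ) (r : ℝ) :
    ∑ i ∈ s, mulLogKernel (x i) r
      = (∑ i ∈ s, max 0 (x i - r) - (∑ i ∈ s, x i) * (1 - r)) / r := by
  simp only [mulLogKernel, ← Finset.sum_div, Finset.sum_sub_distrib, Finset.sum_mul]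

theorem sum_mul_log_le_of_sum_max_sub_le {ι : Type*} (s : Finset ι) {σ ω : ι → ℝ}
    (hσ : ∀ i ∈ s, σ i ∈ Icc 0 1) (hω : ∀ i ∈ s, ω i ∈ Icc 0 1)
    (hsum : ∑ i ∈ s, σ i = ∑ i ∈ s, ω i)
    (h : ∀ r, 0 < r → ∑ i ∈ s, max 0 (σ i - r) ≤ ∑ i ∈ s, max 0 (ω i - r)) :
    ∑ i ∈ s, σ i * log (σ i) ≤ ∑ i ∈ s, ω i * log (ω i) := by
  have integrable {x : ι → ℝ} (hx : ∀ i ∈ s, x i ∈ Icc 0 1) :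
      IntervalIntegrable (fun r => ∑ i ∈ s, mulLogKernel (x i) r) volume 0 1 := by
    simpa only [← Finset.sum_fn] using
      IntervalIntegrable.sum s fun i hi => intervalIntegrable_mulLogKernel (hx i hi).1 (hx i hi).2
  have as_integral {x : ι → ℝ} (hx : ∀ i ∈ s, x i ∈ Icc 0 1) :
      ∑ i ∈ s, x i * log (x i) = ∫ r in 0..1, ∑ i ∈ s, mulLogKernel (x i) r := by
    rw [integral_finsetSum fun i hi => intervalIntegrable_mulLogKernel (hx i hi).1 (hx i hi).2]
    exact Finset.sum_congr rfl fun i hi => (integral_mulLogKernel (hx i hi).1 (hx i hi).2).symm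
  rw [as_integral hσ, as_integral hω]
  refine integral_mono_on zero_le_one (integrable hσ) (integrable hω) fun r hr => ?_
  rw [sum_mulLogKernel, sum_mulLogKernel, hsum]
  rcases hr.1.eq_or_lt with rfl | hr0
  · simp
  · exact div_le_div_of_nonneg_right (by linarith [h r hr0]) hr0.le

theorem stmt_7 (n : ℕ) (ω σ : Fin n → ℝ) (hω : ∀ i, 0 ≤ ω i) (hσ : ∀ i, 0 ≤ σ i)
    (hω1 : ∑ i, ω i = 1) (hσ1 : ∑ i, σ i = 1)
    (h : ∀ r : ℝ, 0 ≤ r → ∑ i, max 0 (σ i - r) ≤ ∑ i, max 0 (ω i - r)) :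
    -∑ i, ω i * Real.log (ω i) ≤ -∑ i, σ i * Real.log (σ i) := by
  have mem_Icc {x : Fin n → ℝ} (hx : ∀ i, 0 ≤ x i) (hx1 : ∑ i, x i = 1) :
      ∀ i ∈ Finset.univ, x i ∈ Icc 0 1 := fun i hi =>
    ⟨hx i, hx1 ▸ Finset.single_le_sum (fun j _ => hx j) hi⟩
  exact neg_le_neg <| sum_mul_log_le_of_sum_max_sub_le _ (mem_Icc hσ hσ1) (mem_Icc hω hω1)
    (hσ1.trans hω1.symm) fun r hr => h r hr.le
end

section
/- Let T : ℓ¹(ℕ) → ℓ¹(ℕ) be a linear map such that ‖T x‖₁ ≤ ‖x‖₁ for all x ∈ ℓ¹ and ‖T x‖_∞ ≤ ‖x‖_∞ for all x ∈ ℓ¹. Then for any nonnegative ω ∈ ℓ¹ with ∑ ωᵢ = 1 and any r ≥ 0, if Tω is nonnegative with ∑ (Tω)ᵢ = 1, then ∑ᵢ max(0, (Tω)ᵢ - r) ≤ ∑ᵢ max(0, ωᵢ - r). -/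
/-!
Write `ω = u + v` with `v i = max 0 (ω i - r)` and `u i = min (ω i) r`. Since `0 ≤ u ≤ r`,
sup-contractivity gives `(T u) i ≤ r`, hence `max 0 ((T ω) i - r) ≤ |(T v) i|`; summing
and using ℓ¹-contractivity, the left side is at most `‖T v‖₁ ≤ ‖v‖₁ = ∑ max 0 (ω i - r)`.
-/

open scoped ENNReal

namespace lp

variable {α : Type*} {p : ℝ≥0∞}

theorem norm_eq_tsum_norm_of_one {E : α → Type*} [∀ i, NormedAddCommGroup (E i)]
    (x : lp E 1) : ‖x‖ = ∑' i, ‖x i‖ := by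
  simpa using norm_rpow_eq_tsum (by norm_num) x

theorem summable_norm_of_one {E : α → Type*} [∀ i, NormedAddCommGroup (E i)]
    (x : lp E 1) : Summable fun i => ‖x i‖ := by
  simpa using (lp.memℓp x).summable (by norm_num)

theorem abs_apply_le_iSup_abs (hp : p ≠ 0) (x : lp (fun _ : α => ℝ) p) (i : α) :
    |x i| ≤ ⨆ j, |x j| :=
  le_ciSup ⟨‖x‖, by rintro _ ⟨j, rfl⟩; exact norm_apply_le_norm hp x j⟩ i

theorem memℓp_max_zero_sub {r : ℝ} (hr : 0 ≤ r) (x : lp (fun _ : α => ℝ) p) :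
    Memℓp (fun i => max 0 (x i - r)) p :=
  (lp.memℓp x).mono' fun i => by
    simp only [Real.norm_eq_abs, abs_le]
    constructor <;> cases max_cases 0 (x i - r) <;> cases abs_cases (x i) <;> linarith

def excess {r : ℝ} (hr : 0 ≤ r) (x : lp (fun _ : α => ℝ) p) :
    lp (fun _ : α => ℝ) p :=
  ⟨fun i => max 0 (x i - r), memℓp_max_zero_sub hr x⟩

@[simp]
theorem excess_apply {r : ℝ} (hr : 0 ≤ r) (x : lp (fun _ : α => ℝ) p) (i : α) :
    excess hr x i = max 0 (x i - r) :=
  rfl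

theorem abs_sub_excess_apply_le {r : ℝ} (hr : 0 ≤ r) (x : lp (fun _ : α => ℝ) p)
    {i : α} (hx : 0 ≤ x i) : |(x - excess hr x) i| ≤ r := by
  rw [coeFn_sub, Pi.sub_apply, excess_apply, abs_le]
  constructor <;> cases max_cases 0 (x i - r) <;> linarith

theorem tsum_max_zero_sub_le_of_contractive
    (T : lp (fun _ : α => ℝ) 1 →ₗ[ℝ] lp (fun _ : α => ℝ) 1)
    (hT1 : ∀ x, ‖T x‖ ≤ ‖x‖) (hTinf : ∀ x, (⨆ i, |(T x) i|) ≤ ⨆ i, |x i|)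
    {x : lp (fun _ : α => ℝ) 1} (hx : ∀ i, 0 ≤ x i) {r : ℝ} (hr : 0 ≤ r) :
    ∑' i, max 0 ((T x) i - r) ≤ ∑' i, max 0 (x i - r) := by
  set v := excess hr x
  set u := x - v
  have hTu : ∀ i, |(T u) i| ≤ r := fun i =>
    (abs_apply_le_iSup_abs one_ne_zero _ i).trans <|
      (hTinf u).trans <| Real.iSup_le (fun j => abs_sub_excess_apply_le hr x (hx j)) hr
  have hterm : ∀ i, max 0 ((T x) i - r) ≤ ‖(T v) i‖ := fun i => by
    have hsplit : (T x) i = (T u) i + (T v) i := by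
      rw [← Pi.add_apply, ← coeFn_add, ← map_add, sub_add_cancel]
    rw [Real.norm_eq_abs, hsplit]
    exact max_le (abs_nonneg _) (by linarith [le_abs_self ((T u) i), le_abs_self ((T v) i), hTu i])
  have hsum := summable_norm_of_one (T v)
  calc ∑' i, max 0 ((T x) i - r)
      ≤ ∑' i, ‖(T v) i‖ :=
        (hsum.of_nonneg_of_le (fun _ => le_max_left _ _) hterm).tsum_le_tsum hterm hsum
    _ = ‖T v‖ := (norm_eq_tsum_norm_of_one _).symm
    _ ≤ ‖v‖ := hT1 v
    _ = ∑' i, max 0 (x i - r) := by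
        rw [norm_eq_tsum_norm_of_one]
        congr with i
        exact abs_of_nonneg (le_max_left _ _)

end lp

theorem stmt_8_general (T : lp (fun _ : ℕ => ℝ) 1 →ₗ[ℝ] lp (fun _ : ℕ => ℝ) 1)
    (hT1 : ∀ x, ‖T x‖ ≤ ‖x‖)
    (hTinf : ∀ x, (⨆ i, |(T x) i|) ≤ ⨆ i, |x i|)
    (ω : lp (fun _ : ℕ => ℝ) 1) (hpos : ∀ i, 0 ≤ ω i)
    (r : ℝ) (hr : 0 ≤ r) :
    (∑' i, max 0 ((T ω) i - r)) ≤ ∑' i, max 0 (ω i - r) :=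
  lp.tsum_max_zero_sub_le_of_contractive T hT1 hTinf hpos hr

theorem stmt_8 (T : lp (fun _ : ℕ => ℝ) 1 →ₗ[ℝ] lp (fun _ : ℕ => ℝ) 1)
    (hT1 : ∀ x, ‖T x‖ ≤ ‖x‖)
    (hTinf : ∀ x, (⨆ i, |(T x) i|) ≤ ⨆ i, |x i|)
    (ω : lp (fun _ : ℕ => ℝ) 1) (hpos : ∀ i, 0 ≤ ω i) (hone : ∑' i, ω i = 1)
    (hTpos : ∀ i, 0 ≤ (T ω) i) (hTone : ∑' i, (T ω) i = 1)
    (r : ℝ) (hr : 0 ≤ r) :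
    (∑' i, max 0 ((T ω) i - r)) ≤ ∑' i, max 0 (ω i - r) :=
  stmt_8_general T hT1 hTinf ω hpos r hr
end

section
/- Let A be a positive semidefinite n×n Hermitian matrix with trace 1 and eigenvalues λ₁,...,λ_n, and let r ≥ 0. Then the infimum over Hermitian matrices B with ‖A - B‖_op ≤ r of the trace norm ‖B‖₁ equals ∑ᵢ max(0, λᵢ - r). -/
open scoped ComplexOrder

/-- The `L²` operator norm of a square complex matrix. -/
noncomputable def opNorm {n : ℕ} (B : Matrix (Fin n) (Fin n) ℂ) : ℝ :=
  ‖Matrix.toEuclideanCLM (𝕜 := ℂ) B‖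

/-!
Lower bound: if `a` is a unit eigenvector of `A` for `λ` and `‖A - B‖ ≤ r`, then
`re ⟪a, B a⟫ ≥ λ - r`. Summing over an orthonormal family of eigenvectors of `A` with `λ > r`
gives the trace of a compression of `B`, which is at most the trace norm of `B`: expanding in an
eigenbasis of `B`, the weight of each eigenvalue `μⱼ` is `∑ₖ |⟪aₖ, bⱼ⟫|² ≤ 1` by Bessel's
inequality.

Upper bound: with `U` diagonalizing `A`, the matrix `B = U diag(max 0 (λᵢ - r)) U⋆` is positive
semidefinite, so its trace norm is its trace `∑ max 0 (λᵢ - r)`, and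
`A - B = U diag(min λᵢ r) U⋆` has norm at most `r` since every `λᵢ ≥ 0`.
-/

open RCLike InnerProductSpace

namespace LinearMap.IsSymmetric

variable {𝕜 E ι κ : Type*} [RCLike 𝕜] [NormedAddCommGroup E] [InnerProductSpace 𝕜 E] [Fintype ι]
  {T : E →ₗ[𝕜] E} (hT : T.IsSymmetric) (b : OrthonormalBasis ι 𝕜 E) {μ : ι → ℝ}
  (hb : ∀ i, T (b i) = (μ i : 𝕜) • b i)
include hT hb

theorem re_inner_apply_self_eq_sum (x : E) :
    re ⟪x, T x⟫_𝕜 = ∑ i, μ i * ‖⟪b i, x⟫_𝕜‖ ^ 2 := by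
  have hcoord : ∀ i, ⟪b i, T x⟫_𝕜 = μ i * ⟪b i, x⟫_𝕜 := fun i => by
    rw [← hT, hb, inner_smul_left, conj_ofReal]
  rw [← b.sum_inner_mul_inner x (T x), map_sum]
  refine Finset.sum_congr rfl fun i _ => ?_
  rw [hcoord, ← inner_conj_symm, mul_left_comm, RCLike.conj_mul, ← ofReal_pow, ← ofReal_mul,
    ofReal_re]

theorem sum_re_inner_apply_self_le {e : κ → E} (he : Orthonormal 𝕜 e) (s : Finset κ) :
    ∑ k ∈ s, re ⟪e k, T (e k)⟫_𝕜 ≤ ∑ i, |μ i| :=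
  calc ∑ k ∈ s, re ⟪e k, T (e k)⟫_𝕜
      = ∑ i, μ i * ∑ k ∈ s, ‖⟪e k, b i⟫_𝕜‖ ^ 2 := by
        simp only [hT.re_inner_apply_self_eq_sum b hb, Finset.mul_sum, norm_inner_symm]
        exact Finset.sum_comm
    _ ≤ ∑ i, |μ i| * ‖b i‖ ^ 2 := by
        refine Finset.sum_le_sum fun i _ => ?_
        calc μ i * ∑ k ∈ s, ‖⟪e k, b i⟫_𝕜‖ ^ 2
            ≤ |μ i| * ∑ k ∈ s, ‖⟪e k, b i⟫_𝕜‖ ^ 2 := by gcongr; exact le_abs_self _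
          _ ≤ |μ i| * ‖b i‖ ^ 2 := by gcongr; exact he.sum_inner_products_le _
    _ = ∑ i, |μ i| := by simp [b.orthonormal.1]

end LinearMap.IsSymmetric

namespace Matrix

variable {𝕜 n : Type*} [RCLike 𝕜] [Fintype n] [DecidableEq n]

theorem IsHermitian.toEuclideanLin_eigenvectorBasis {A : Matrix n n 𝕜} (hA : A.IsHermitian)
    (j : n) :
    toEuclideanLin A (hA.eigenvectorBasis j) = (hA.eigenvalues j : 𝕜) • hA.eigenvectorBasis j := by
  ext1
  rw [toLpLin_apply, WithLp.ofLp_toLp, hA.mulVec_eigenvectorBasis, WithLp.ofLp_smul,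
    RCLike.real_smul_eq_coe_smul (K := 𝕜)]

theorem IsHermitian.eigenvalues_sub_le_re_inner {A B : Matrix n n 𝕜} (hA : A.IsHermitian)
    (i : n) :
    hA.eigenvalues i - ‖toEuclideanCLM (n := n) (𝕜 := 𝕜) (A - B)‖ ≤
      re ⟪hA.eigenvectorBasis i, toEuclideanLin B (hA.eigenvectorBasis i)⟫_𝕜 := by
  set a := hA.eigenvectorBasis i
  have ha : ‖a‖ = 1 := hA.eigenvectorBasis.orthonormal.1 i
  have hdiag : re ⟪a, toEuclideanLin A a⟫_𝕜 = hA.eigenvalues i := by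
    rw [hA.toEuclideanLin_eigenvectorBasis, inner_smul_right, inner_self_eq_norm_sq_to_K, ha]
    simp
  have hAB : re ⟪a, toEuclideanCLM (n := n) (𝕜 := 𝕜) (A - B) a⟫_𝕜 ≤
      ‖toEuclideanCLM (n := n) (𝕜 := 𝕜) (A - B)‖ :=
    calc _ ≤ ‖a‖ * ‖toEuclideanCLM (n := n) (𝕜 := 𝕜) (A - B) a‖ := re_inner_le_norm _ _
      _ ≤ ‖a‖ * (‖toEuclideanCLM (n := n) (𝕜 := 𝕜) (A - B)‖ * ‖a‖) := by
        gcongr; exact ContinuousLinearMap.le_opNorm _ _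
      _ = _ := by rw [ha, one_mul, mul_one]
  change re ⟪a, toEuclideanLin (A - B) a⟫_𝕜 ≤ _ at hAB
  rw [map_sub, LinearMap.sub_apply, inner_sub_right, map_sub, hdiag] at hAB
  linarith

theorem IsHermitian.sum_max_eigenvalues_sub_le {A B : Matrix n n 𝕜} (hA : A.IsHermitian)
    (hB : B.IsHermitian) {r : ℝ} (hAB : ‖toEuclideanCLM (n := n) (𝕜 := 𝕜) (A - B)‖ ≤ r) :
    ∑ i, max 0 (hA.eigenvalues i - r) ≤ ∑ i, |hB.eigenvalues i| :=
  calc ∑ i, max 0 (hA.eigenvalues i - r)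
      = ∑ i with r < hA.eigenvalues i, (hA.eigenvalues i - r) := by
        rw [Finset.sum_filter]
        refine Finset.sum_congr rfl fun i _ => ?_
        split_ifs with h
        · exact max_eq_right (by linarith)
        · exact max_eq_left (by linarith)
    _ ≤ ∑ i with r < hA.eigenvalues i,
          re ⟪hA.eigenvectorBasis i, toEuclideanLin B (hA.eigenvectorBasis i)⟫_𝕜 :=
        Finset.sum_le_sum fun i _ => by linarith [hA.eigenvalues_sub_le_re_inner (B := B) i]
    _ ≤ ∑ i, |hB.eigenvalues i| :=
        (isSymmetric_toEuclideanLin_iff.mpr hB).sum_re_inner_apply_self_le hB.eigenvectorBasis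
          hB.toEuclideanLin_eigenvectorBasis hA.eigenvectorBasis.orthonormal _

open scoped Matrix.Norms.L2Operator in
theorem PosSemidef.exists_opNorm_sub_le_and_sum_abs_eigenvalues_eq {A : Matrix n n 𝕜}
    (hA : A.PosSemidef) {r : ℝ} (hr : 0 ≤ r) :
    ∃ B : Matrix n n 𝕜, ∃ hB : B.IsHermitian, ‖toEuclideanCLM (n := n) (𝕜 := 𝕜) (A - B)‖ ≤ r ∧
      ∑ i, |hB.eigenvalues i| = ∑ i, max 0 (hA.1.eigenvalues i - r) := by
  set U := hA.1.eigenvectorUnitary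
  set ν : n → ℝ := fun i => max 0 (hA.1.eigenvalues i - r)
  set B := Unitary.conjStarAlgAut 𝕜 _ U (diagonal (RCLike.ofReal ∘ ν)) with hB_def
  have hB : B.PosSemidef := by
    rw [hB_def, Unitary.conjStarAlgAut_apply, star_eq_conjTranspose]
    exact (posSemidef_diagonal_iff.mpr fun i => by simp [ν]).mul_mul_conjTranspose_same _
  refine ⟨B, hB.1, ?_, ?_⟩
  · have hsub : A - B =
        Unitary.conjStarAlgAut 𝕜 _ U (diagonal (RCLike.ofReal ∘ (hA.1.eigenvalues - ν))) := by
      conv_lhs => rw [hA.1.spectral_theorem]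
      rw [← map_sub, diagonal_sub]
      congr 2
      ext i
      simp
    rw [← cstar_norm_def, hsub, Unitary.conjStarAlgAut_apply,
      CStarRing.norm_mul_mem_unitary _ (Unitary.star_mem U.2),
      CStarRing.norm_mem_unitary_mul _ U.2, l2_opNorm_diagonal, pi_norm_le_iff_of_nonneg hr]
    intro i
    have := hA.eigenvalues_nonneg i
    simp only [Function.comp_apply, Pi.sub_apply, norm_ofReal, ν]
    rw [abs_le]
    constructor <;> cases max_cases 0 (hA.1.eigenvalues i - r) <;> linarith
  · have htrace : B.trace = ∑ i, (ν i : 𝕜) := by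
      rw [hB_def, Unitary.conjStarAlgAut_apply, trace_mul_cycle, Unitary.coe_star_mul_self,
        one_mul, trace_diagonal]
      rfl
    rw [hB.1.trace_eq_sum_eigenvalues] at htrace
    calc ∑ i, |hB.1.eigenvalues i| = ∑ i, hB.1.eigenvalues i :=
          Finset.sum_congr rfl fun i _ => abs_of_nonneg (hB.eigenvalues_nonneg i)
      _ = ∑ i, ν i := by exact_mod_cast htrace

end Matrix

theorem stmt_11_general (n : ℕ) (A : Matrix (Fin n) (Fin n) ℂ) (hA : A.IsHermitian)
    (hApsd : A.PosSemidef) (r : ℝ) (hr : 0 ≤ r) :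
    sInf {t : ℝ | ∃ B : Matrix (Fin n) (Fin n) ℂ, ∃ hB : B.IsHermitian,
        opNorm (A - B) ≤ r ∧ t = ∑ i, |hB.eigenvalues i|} =
      ∑ i, max 0 (hA.eigenvalues i - r) := by
  obtain ⟨B₀, hB₀, hAB₀, hB₀_trace⟩ := hApsd.exists_opNorm_sub_le_and_sum_abs_eigenvalues_eq hr
  refine IsLeast.csInf_eq ⟨⟨B₀, hB₀, hAB₀, hB₀_trace.symm⟩, ?_⟩
  rintro t ⟨B, hB, hAB, rfl⟩
  exact hA.sum_max_eigenvalues_sub_le hB hAB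

theorem stmt_11 (n : ℕ) (A : Matrix (Fin n) (Fin n) ℂ) (hA : A.IsHermitian)
    (hApsd : A.PosSemidef) (htr : A.trace = 1) (r : ℝ) (hr : 0 ≤ r) :
    sInf {t : ℝ | ∃ B : Matrix (Fin n) (Fin n) ℂ, ∃ hB : B.IsHermitian,
        opNorm (A - B) ≤ r ∧ t = ∑ i, |hB.eigenvalues i|} =
      ∑ i, max 0 (hA.eigenvalues i - r) :=
  stmt_11_general n A hA hApsd r hr
end

section
/- Let A be a positive semidefinite n×n Hermitian matrix with trace 1, and let D be the diagonal matrix obtained from A by erasing all off-diagonal entries. Then the entropy of D is at least the entropy of A: -∑ᵢ Aᵢᵢ ln Aᵢᵢ ≥ -∑ᵢ λᵢ ln λᵢ, where λᵢ are the eigenvalues of A. -/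
open scoped ComplexOrder

/-!
Write `A = U D U*` with `U` unitary and `D` the diagonal of eigenvalues. Then
`Aᵢᵢ = ∑ₖ |Uᵢₖ|² λₖ`, and the matrix `(|Uᵢₖ|²)` is doubly stochastic. Hence each `Aᵢᵢ` is a
convex combination of the eigenvalues, and Jensen's inequality for the concave function
`x ↦ -x log x`, summed over `i`, gives the claim because the columns of `(|Uᵢₖ|²)` also sum to `1`.
-/

open Finset Matrix

lemma ConcaveOn.sum_le_sum_mulVec_of_mem_doublyStochastic {n : Type*} [Fintype n] [DecidableEq n]
    {s : Set ℝ} {f : ℝ → ℝ} (hf : ConcaveOn ℝ s f) {M : Matrix n n ℝ}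
    (hM : M ∈ doublyStochastic ℝ n) {x : n → ℝ} (hx : ∀ i, x i ∈ s) :
    ∑ i, f (x i) ≤ ∑ i, f ((M *ᵥ x) i) := by
  calc ∑ j, f (x j) = ∑ i, ∑ j, M i j * f (x j) := by
        rw [sum_comm]; simp [← sum_mul, sum_col_of_mem_doublyStochastic hM]
    _ ≤ ∑ i, f ((M *ᵥ x) i) := sum_le_sum fun i _ =>
        hf.le_map_sum (fun j _ => nonneg_of_mem_doublyStochastic hM)
          (sum_row_of_mem_doublyStochastic hM i) (fun j _ => hx j)

namespace Matrix

variable {𝕜 n : Type*} [RCLike 𝕜] [Fintype n] [DecidableEq n]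

lemma norm_sq_entries_mem_doublyStochastic (U : unitaryGroup n 𝕜) :
    of (fun i j => ‖(U : Matrix n n 𝕜) i j‖ ^ 2) ∈ doublyStochastic ℝ n := by
  refine mem_doublyStochastic_iff_sum.2 ⟨fun i j => by simp only [of_apply]; positivity,
    fun i => ?_, fun j => ?_⟩
  · have := congr_fun₂ (Unitary.coe_mul_star_self U) i i
    simp only [Unitary.coe_star, mul_apply, star_apply, RCLike.star_def, RCLike.mul_conj,
      one_apply_eq] at this
    exact_mod_cast this
  · have := congr_fun₂ (Unitary.coe_star_mul_self U) j j
    simp only [mul_apply, star_apply, RCLike.star_def, RCLike.conj_mul, one_apply_eq] at this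
    exact_mod_cast this

lemma IsHermitian.re_diag_eq_mulVec_eigenvalues {A : Matrix n n 𝕜} (hA : A.IsHermitian) (i : n) :
    RCLike.re (A i i) =
      (of (fun i j => ‖(hA.eigenvectorUnitary : Matrix n n 𝕜) i j‖ ^ 2) *ᵥ hA.eigenvalues) i := by
  conv_lhs => rw [hA.spectral_theorem, Unitary.conjStarAlgAut_apply]
  rw [mul_apply, map_sum]
  refine sum_congr rfl fun k _ => ?_
  rw [mul_diagonal, star_apply, RCLike.star_def, mul_right_comm, RCLike.mul_conj]
  simp only [Function.comp_apply, of_apply, ← RCLike.ofReal_pow, ← RCLike.ofReal_mul,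
    RCLike.ofReal_re]

theorem IsHermitian.sum_map_eigenvalues_le_sum_map_re_diag {A : Matrix n n 𝕜} (hA : A.IsHermitian)
    {s : Set ℝ} {f : ℝ → ℝ} (hf : ConcaveOn ℝ s f) (hs : ∀ i, hA.eigenvalues i ∈ s) :
    ∑ i, f (hA.eigenvalues i) ≤ ∑ i, f (RCLike.re (A i i)) := by
  simpa only [hA.re_diag_eq_mulVec_eigenvalues] using
    hf.sum_le_sum_mulVec_of_mem_doublyStochastic
      (norm_sq_entries_mem_doublyStochastic hA.eigenvectorUnitary) hs

end Matrix

theorem stmt_12_general (n : ℕ) (A : Matrix (Fin n) (Fin n) ℂ) (hA : A.IsHermitian)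
    (hApsd : A.PosSemidef) :
    -∑ i, hA.eigenvalues i * Real.log (hA.eigenvalues i) ≤
      -∑ i, (A i i).re * Real.log ((A i i).re) := by
  simpa only [Real.negMulLog, neg_mul, sum_neg_distrib, RCLike.re_to_complex] using
    hA.sum_map_eigenvalues_le_sum_map_re_diag Real.concaveOn_negMulLog hApsd.eigenvalues_nonneg

theorem stmt_12 (n : ℕ) (A : Matrix (Fin n) (Fin n) ℂ) (hA : A.IsHermitian)
    (hApsd : A.PosSemidef) (htr : A.trace = 1) :
    -∑ i, hA.eigenvalues i * Real.log (hA.eigenvalues i) ≤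
      -∑ i, (A i i).re * Real.log ((A i i).re) :=
  stmt_12_general n A hA hApsd
end

section
/- Let π : ℓ¹(ℕ,ℝ) → ℓ¹(ℕ,ℝ) be a linear ℓ¹-contraction that is self-adjoint with respect to the pairing ⟨a,b⟩ = ∑ aᵢbᵢ (for b ∈ ℓ∞ ∩ ℓ¹): ⟨π a, b⟩ = ⟨a, π b⟩ for all a, b ∈ ℓ¹. Then π is also a contraction for the sup norm: ‖π a‖_∞ ≤ ‖a‖_∞ for all a ∈ ℓ¹. -/
/-!
Test against the unit vector `e_i`: by self-adjointness
`(π a)_i = ⟨π a, e_i⟩ = ⟨a, π e_i⟩`, and Hölder's inequality for the `ℓ^∞`–`ℓ¹` pairing bounds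
this by `‖a‖_∞ ‖π e_i‖₁ ≤ ‖a‖_∞ ‖e_i‖₁ = ‖a‖_∞`.
-/

open scoped lp

lemma lp.abs_apply_le_iSup_abs_s16 {ι : Type*} {p : ENNReal} (hp : p ≠ 0)
    (a : lp (fun _ : ι => ℝ) p) (j : ι) : |a j| ≤ ⨆ i, |a i| :=
  le_ciSup ⟨‖a‖, by rintro _ ⟨i, rfl⟩; exact lp.norm_apply_le_norm hp a i⟩ j

lemma lp.norm_eq_tsum_abs {ι : Type*} (b : ℓ¹(ι, ℝ)) : ‖b‖ = ∑' j, |b j| := by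
  simp [lp.norm_eq_tsum_rpow (by norm_num : 0 < (1 : ENNReal).toReal)]

lemma lp.summable_abs {ι : Type*} (b : ℓ¹(ι, ℝ)) : Summable fun j => |b j| := by
  simpa using b.2.summable (by norm_num)

lemma lp.abs_tsum_mul_le_mul_norm {ι : Type*} {a : ι → ℝ} {C : ℝ} (ha : ∀ j, |a j| ≤ C)
    (b : ℓ¹(ι, ℝ)) : |∑' j, a j * b j| ≤ C * ‖b‖ := by
  have hdom : ∀ j, |a j * b j| ≤ C * |b j| := fun j => by
    rw [abs_mul]; exact mul_le_mul_of_nonneg_right (ha j) (abs_nonneg _)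
  have hCb : Summable fun j => C * |b j| := (lp.summable_abs b).mul_left C
  have habs : Summable fun j => |a j * b j| := hCb.of_nonneg_of_le (fun _ => abs_nonneg _) hdom
  calc |∑' j, a j * b j| ≤ ∑' j, |a j * b j| := by
        simpa only [Real.norm_eq_abs] using norm_tsum_le_tsum_norm (f := fun j => a j * b j) habs
    _ ≤ ∑' j, C * |b j| := habs.tsum_le_tsum hdom hCb
    _ = C * ‖b‖ := by rw [tsum_mul_left, lp.norm_eq_tsum_abs]

lemma lp.tsum_mul_single_one {ι : Type*} [DecidableEq ι] {p : ENNReal} (f : ι → ℝ) (i : ι) :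
    ∑' j, f j * lp.single (E := fun _ : ι => ℝ) p i 1 j = f i := by
  simp [Pi.single_apply]

theorem stmt_16 (π : lp (fun _ : ℕ => ℝ) 1 →ₗ[ℝ] lp (fun _ : ℕ => ℝ) 1)
    (hcontr : ∀ a, ‖π a‖ ≤ ‖a‖)
    (hsa : ∀ a b : lp (fun _ : ℕ => ℝ) 1,
      (∑' i, (π a) i * b i) = ∑' i, a i * (π b) i) :
    ∀ a : lp (fun _ : ℕ => ℝ) 1, (⨆ i, |(π a) i|) ≤ ⨆ i, |a i| := by
  intro a
  refine ciSup_le fun i => ?_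
  set e : ℓ¹(ℕ, ℝ) := lp.single 1 i 1
  have hS : 0 ≤ ⨆ j, |a j| := Real.iSup_nonneg fun j => abs_nonneg (a j)
  calc |(π a) i| = |∑' j, (π a) j * e j| := by rw [lp.tsum_mul_single_one]
    _ = |∑' j, a j * (π e) j| := by rw [hsa]
    _ ≤ (⨆ j, |a j|) * ‖π e‖ :=
        lp.abs_tsum_mul_le_mul_norm (lp.abs_apply_le_iSup_abs_s16 one_ne_zero a) _
    _ ≤ (⨆ j, |a j|) * ‖e‖ := mul_le_mul_of_nonneg_left (hcontr e) hS
    _ = ⨆ j, |a j| := by rw [lp.norm_single one_pos, norm_one, mul_one]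
end

section
/- Let ω : Fin n → ℝ and σ : Fin m → ℝ be nonnegative sequences each summing to 1, and suppose ∑ᵢ max(0, ωᵢ - r) = ∑ⱼ max(0, σⱼ - r) for all r ≥ 0. Then ω and σ have the same nonzero entries with multiplicity (their multisets of positive values coincide), and in particular -∑ᵢ ωᵢ ln ωᵢ = -∑ⱼ σⱼ ln σⱼ. -/
/-!
The hinge sum `r ↦ ∑ max 0 (x - r)` of a finite multiset of reals vanishes exactly for `r` at or
above its largest element. So two multisets of positive reals with the same hinge sums on `[0, ∞)`
have the same largest element; removing it from both preserves the hypothesis, and induction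
identifies the multisets. Zero entries contribute neither to the hinge sums nor, as `0 ln 0 = 0`,
to the entropy, which is therefore a function of the multiset of positive entries.
-/

open Multiset

noncomputable def hingeSum (A : Multiset ℝ) (r : ℝ) : ℝ :=
  (A.map fun a => max 0 (a - r)).sum

lemma hingeSum_cons (a : ℝ) (A : Multiset ℝ) (r : ℝ) :
    hingeSum (a ::ₘ A) r = max 0 (a - r) + hingeSum A r := by
  simp only [hingeSum, map_cons, sum_cons]

lemma hingeSum_eq_zero_iff {A : Multiset ℝ} {r : ℝ} : hingeSum A r = 0 ↔ ∀ a ∈ A, a ≤ r := by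
  refine ⟨fun h a ha => ?_, fun h => sum_eq_zero fun x hx => ?_⟩
  · have hle : max 0 (a - r) ≤ hingeSum A r :=
      single_le_sum (fun _ hx => by obtain ⟨_, _, rfl⟩ := mem_map.1 hx; exact le_max_left _ _) _
        (mem_map_of_mem _ ha)
    linarith [le_max_right 0 (a - r)]
  · obtain ⟨a, ha, rfl⟩ := mem_map.1 hx
    exact max_eq_left (sub_nonpos.2 (h a ha))

lemma eq_zero_of_hingeSum_zero_eq_zero {A : Multiset ℝ} (hA : ∀ a ∈ A, 0 < a)
    (h : hingeSum A 0 = 0) : A = 0 :=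
  eq_zero_of_forall_notMem fun a ha => (hA a ha).not_ge (hingeSum_eq_zero_iff.1 h a ha)

lemma forall_le_of_hingeSum_eq {A B : Multiset ℝ} {a : ℝ} (ha : a ∈ A) (hA : ∀ a ∈ A, 0 < a)
    (haMax : ∀ x ∈ A, x ≤ a) (h : ∀ r, 0 ≤ r → hingeSum A r = hingeSum B r) :
    ∀ b ∈ B, b ≤ a :=
  hingeSum_eq_zero_iff.1 (h a (hA a ha).le ▸ hingeSum_eq_zero_iff.2 haMax)

theorem eq_of_hingeSum_eq {A B : Multiset ℝ} (hA : ∀ a ∈ A, 0 < a) (hB : ∀ b ∈ B, 0 < b)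
    (h : ∀ r, 0 ≤ r → hingeSum A r = hingeSum B r) : A = B := by
  induction A using strongInductionOn generalizing B with
  | ih A IH =>
  rcases eq_or_ne A 0 with rfl | hA0
  · refine (eq_zero_of_hingeSum_zero_eq_zero hB ?_).symm
    rw [← h 0 le_rfl]
    simp [hingeSum]
  have hB0 : B ≠ 0 := fun hB0 =>
    hA0 (eq_zero_of_hingeSum_zero_eq_zero hA (by rw [h 0 le_rfl, hB0]; simp [hingeSum]))
  obtain ⟨a, ha, haMax⟩ := exists_max_image id hA0
  obtain ⟨b, hb, hbMax⟩ := exists_max_image id hB0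
  obtain rfl : a = b := le_antisymm
    (forall_le_of_hingeSum_eq hb hB hbMax (fun r hr => (h r hr).symm) a ha)
    (forall_le_of_hingeSum_eq ha hA haMax h b hb)
  have herase : A.erase a = B.erase a := by
    refine IH _ (erase_lt.2 ha) (fun x hx => hA x (mem_of_mem_erase hx))
      (fun x hx => hB x (mem_of_mem_erase hx)) fun r hr => ?_
    have hr := h r hr
    rw [← cons_erase ha, ← cons_erase hb, hingeSum_cons, hingeSum_cons] at hr
    exact add_left_cancel hr
  rw [← cons_erase ha, ← cons_erase hb, herase]

lemma sum_map_filter_pos_map {ι M : Type*} [Fintype ι] [AddCommMonoid M] {ω : ι → ℝ}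
    (hω : ∀ i, 0 ≤ ω i) {g : ℝ → M} (hg : g 0 = 0) :
    (((Finset.univ.val.map ω).filter (fun x => 0 < x)).map g).sum = ∑ i, g (ω i) := by
  rw [filter_map, map_map]
  exact Finset.sum_filter_of_ne fun i _ hi => (hω i).lt_of_ne' fun h0 => hi (by simp [h0, hg])

lemma hingeSum_filter_pos_map {ι : Type*} [Fintype ι] {ω : ι → ℝ} (hω : ∀ i, 0 ≤ ω i)
    {r : ℝ} (hr : 0 ≤ r) :
    hingeSum ((Finset.univ.val.map ω).filter (fun x => 0 < x)) r = ∑ i, max 0 (ω i - r) :=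
  sum_map_filter_pos_map hω (g := fun x => max 0 (x - r)) (max_eq_left (by linarith))

theorem stmt_17_general (n m : ℕ) (ω : Fin n → ℝ) (σ : Fin m → ℝ)
    (hω : ∀ i, 0 ≤ ω i) (hσ : ∀ j, 0 ≤ σ j)
    (h : ∀ r : ℝ, 0 ≤ r → ∑ i, max 0 (ω i - r) = ∑ j, max 0 (σ j - r)) :
    ((Finset.univ.val.map ω).filter (fun x => 0 < x)) =
      ((Finset.univ.val.map σ).filter (fun x => 0 < x)) ∧
    -∑ i, ω i * Real.log (ω i) = -∑ j, σ j * Real.log (σ j) := by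
  have hpos (S : Multiset ℝ) : ∀ x ∈ S.filter (fun x => 0 < x), 0 < x :=
    fun _ hx => (mem_filter.1 hx).2
  have hAB : (Finset.univ.val.map ω).filter (fun x => 0 < x) =
      (Finset.univ.val.map σ).filter (fun x => 0 < x) :=
    eq_of_hingeSum_eq (hpos _) (hpos _) fun r hr => by
      rw [hingeSum_filter_pos_map hω hr, hingeSum_filter_pos_map hσ hr, h r hr]
  refine ⟨hAB, ?_⟩
  rw [← sum_map_filter_pos_map hω (g := fun x => x * Real.log x) (zero_mul _), hAB,
    sum_map_filter_pos_map hσ (g := fun x => x * Real.log x) (zero_mul _)]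

theorem stmt_17 (n m : ℕ) (ω : Fin n → ℝ) (σ : Fin m → ℝ)
    (hω : ∀ i, 0 ≤ ω i) (hσ : ∀ j, 0 ≤ σ j)
    (hω1 : ∑ i, ω i = 1) (hσ1 : ∑ j, σ j = 1)
    (h : ∀ r : ℝ, 0 ≤ r → ∑ i, max 0 (ω i - r) = ∑ j, max 0 (σ j - r)) :
    ((Finset.univ.val.map ω).filter (fun x => 0 < x)) =
      ((Finset.univ.val.map σ).filter (fun x => 0 < x)) ∧
    -∑ i, ω i * Real.log (ω i) = -∑ j, σ j * Real.log (σ j) :=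
  stmt_17_general n m ω σ hω hσ h
end
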